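/- arXiv:2109.01816 — 13 statements merged into one kernel-verified Lean document; each statement's English description precedes it below -/
import Mathlib

section
/- Let A, B, C, X be real quaternions. If A·X − X·B = C, then D·X = A·C − C·(star B), where D := A² − (B + star B)·A + B·(star B) and star denotes quaternion conjugation. -/
/-! Expanding `A * (A * X - X * B) - (A * X - X * B) * star B` gives
`A ^ 2 * X - A * X * (B + star B) + X * (B * star B)`. For quaternions, `B + star B` and
`B * star B` are real, hence central, and can be moved to the left of `A * X` and `X`. -/

theorem mul_eq_of_sylvester_of_commute {R : Type*} [Ring R] {A B B' X : R}
    (h_add : Commute (A * X) (B + B')) (h_mul : Commute X (B * B')) :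
    (A ^ 2 - (B + B') * A + B * B') * X = A * (A * X - X * B) - (A * X - X * B) * B' := by
  calc (A ^ 2 - (B + B') * A + B * B') * X
      = A ^ 2 * X - (B + B') * (A * X) + B * B' * X := by noncomm_ring
    _ = A ^ 2 * X - A * X * (B + B') + X * (B * B') := by rw [h_add.eq, h_mul.eq]
    _ = A * (A * X - X * B) - (A * X - X * B) * B' := by noncomm_ring

namespace Quaternion

variable {R : Type*} [CommRing R]

theorem commute_self_add_star (a b : ℍ[R]) : Commute a (b + star b) := by
  rw [self_add_star']
  exact (coe_commutes _ a).symm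

theorem commute_self_mul_star (a b : ℍ[R]) : Commute a (b * star b) := by
  rw [self_mul_star]
  exact (coe_commutes _ a).symm

end Quaternion

theorem stmt_0 (A B C X : Quaternion ℝ)
    (h : A * X - X * B = C) :
    (A ^ 2 - (B + star B) * A + B * star B) * X = A * C - C * star B := by
  subst h
  exact mul_eq_of_sylvester_of_commute (Quaternion.commute_self_add_star _ _)
    (Quaternion.commute_self_mul_star _ _)
end

section
/- Let A, B, C be real quaternions and set D := A² − (B + star B)·A + B·(star B). If D ≠ 0, then X := D⁻¹·(A·C − C·(star B)) is the unique quaternion satisfying A·X − X·B = C. -/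
/-!
Write `L_B X = A X - X B` and let `B'` be such that `B + B'` and `B B'` are central (for quaternions,
`B' = star B`, with `B + B' = 2 re B` and `B B' = ‖B‖²`). Then
`L_{B'} (L_B X) = L_B (L_{B'} X) = D X` with `D = A² - (B + B') A + B B'`, and `D` commutes with `A`,
so `L_B` commutes with left multiplication by `D⁻¹`. Hence `L_B X = C` forces `D X = L_{B'} C`, and
conversely `L_B (D⁻¹ L_{B'} C) = D⁻¹ L_B (L_{B'} C) = C`.
-/

section Sylvester

variable {R : Type*}

theorem sylvester_comp_eq_mul [Ring R] (A B B' X : R)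
    (hs : ∀ Y, Commute (B + B') Y) (hp : ∀ Y, Commute (B * B') Y) :
    A * (A * X - X * B) - (A * X - X * B) * B' = (A ^ 2 - (B + B') * A + B * B') * X := by
  have hs' : A * X * (B + B') = (B + B') * (A * X) := (hs _).eq.symm
  have hp' : X * (B * B') = B * B' * X := (hp X).eq.symm
  calc A * (A * X - X * B) - (A * X - X * B) * B'
      = A ^ 2 * X - A * X * (B + B') + X * (B * B') := by noncomm_ring
    _ = (A ^ 2 - (B + B') * A + B * B') * X := by rw [hs', hp']; noncomm_ring

theorem mul_comm_of_central_add [Ring R] {B B' : R} (hs : ∀ Y, Commute (B + B') Y) :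
    B' * B = B * B' := by
  have h : B' = (B + B') - B := by abel
  rw [h, sub_mul, mul_sub, (hs B).eq]

theorem sylvester_poly_commute [Ring R] (A B B' : R)
    (hs : ∀ Y, Commute (B + B') Y) (hp : ∀ Y, Commute (B * B') Y) :
    Commute (A ^ 2 - (B + B') * A + B * B') A :=
  (((Commute.refl A).pow_left 2).sub_left ((hs A).mul_left (Commute.refl A))).add_left (hp A)

theorem sylvester_eq_iff [DivisionRing R] {A B B' C X : R}
    (hs : ∀ Y, Commute (B + B') Y) (hp : ∀ Y, Commute (B * B') Y)
    (hD : A ^ 2 - (B + B') * A + B * B' ≠ 0) :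
    A * X - X * B = C ↔ X = (A ^ 2 - (B + B') * A + B * B')⁻¹ * (A * C - C * B') := by
  set D := A ^ 2 - (B + B') * A + B * B'
  constructor
  · rintro rfl
    rw [sylvester_comp_eq_mul A B B' X hs hp, inv_mul_cancel_left₀ hD]
  · rintro rfl
    have hs' : ∀ Y, Commute (B' + B) Y := by rwa [add_comm]
    have hp' : ∀ Y, Commute (B' * B) Y := by rwa [mul_comm_of_central_add hs]
    have hDC : A * (A * C - C * B') - (A * C - C * B') * B = D * C := by
      rw [sylvester_comp_eq_mul A B' B C hs' hp', add_comm B' B,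
        mul_comm_of_central_add hs]
    have hAD : A * D⁻¹ = D⁻¹ * A := (sylvester_poly_commute A B B' hs hp).inv_left₀.eq.symm
    calc A * (D⁻¹ * (A * C - C * B')) - D⁻¹ * (A * C - C * B') * B
        = D⁻¹ * (A * (A * C - C * B') - (A * C - C * B') * B) := by
          rw [← mul_assoc, hAD]; noncomm_ring
      _ = C := by rw [hDC, inv_mul_cancel_left₀ hD]

end Sylvester

theorem stmt_1 (A B C : Quaternion ℝ)
    (D : Quaternion ℝ) (hD : D = A ^ 2 - (B + star B) * A + B * star B)
    (hD0 : D ≠ 0) :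
    A * (D⁻¹ * (A * C - C * star B)) - (D⁻¹ * (A * C - C * star B)) * B = C ∧
      ∀ X : Quaternion ℝ, A * X - X * B = C → X = D⁻¹ * (A * C - C * star B) := by
  have hs : ∀ Y, Commute (B + star B) Y := by
    rw [Quaternion.self_add_star']; exact Quaternion.coe_commute _
  have hp : ∀ Y, Commute (B * star B) Y := by
    rw [Quaternion.self_mul_star]; exact Quaternion.coe_commute _
  subst hD
  exact ⟨(sylvester_eq_iff hs hp hD0).mpr rfl, fun X => (sylvester_eq_iff hs hp hD0).mp⟩
end

section
/- Let K, L, M, N, P be real quaternions with M ≠ 0 and L ≠ 0. Set A := M⁻¹·K, B := −N·L⁻¹, C := M⁻¹·P·L⁻¹, and D := A² − (B + star B)·A + B·(star B). If D ≠ 0, then X := D⁻¹·(A·C − C·(star B)) is the unique quaternion satisfying K·X·L + M·X·N = P. -/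
/-!
Multiplying by `M⁻¹` on the left and `L⁻¹` on the right turns the equation into the Sylvester
equation `A X - X B = C`. Write `S Y = A Y - Y B` and `T Y = A Y - Y B̄`. Since `B + B̄` and
`B B̄ = B̄ B` are real, hence central, both composites `S ∘ T` and `T ∘ S` are left multiplication
by `D = A² - (B + B̄) A + B B̄`, a real polynomial in `A`. So when `D ≠ 0`, `D⁻¹ T` is a two-sided
inverse of `S`.
-/

theorem mul_mul_add_mul_mul_eq_iff {α : Type*} [DivisionRing α] {K L M N P X : α}
    (hM : M ≠ 0) (hL : L ≠ 0) :
    K * X * L + M * X * N = P ↔ M⁻¹ * K * X - X * -(N * L⁻¹) = M⁻¹ * P * L⁻¹ := by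
  have hfactor : M * (M⁻¹ * K * X - X * -(N * L⁻¹)) * L = K * X * L + M * X * N :=
    calc M * (M⁻¹ * K * X - X * -(N * L⁻¹)) * L
        = M * M⁻¹ * K * X * L + M * X * N * (L⁻¹ * L) := by noncomm_ring
      _ = K * X * L + M * X * N := by rw [mul_inv_cancel₀ hM, inv_mul_cancel₀ hL, one_mul, mul_one]
  rw [← hfactor, ← eq_mul_inv_iff_mul_eq₀ hL, ← eq_inv_mul_iff_mul_eq₀ hM, mul_assoc M⁻¹ P]

namespace Quaternion

section CommRing

variable {R : Type*} [CommRing R] (A B : ℍ[R])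

theorem commute_sq_sub_add_star_mul_add_mul_star :
    Commute A (A ^ 2 - (B + star B) * A + B * star B) := by
  rw [self_add_star', self_mul_star]
  exact (((Commute.refl A).pow_right 2).sub_right
    ((coe_commute _ A).symm.mul_right (Commute.refl A))).add_right (coe_commute _ A).symm

theorem sylvester_comp_sylvester_star (Y : ℍ[R]) :
    A * (A * Y - Y * star B) - (A * Y - Y * star B) * B =
      (A ^ 2 - (B + star B) * A + B * star B) * Y := by
  have htrace : A * Y * star B + A * Y * B = (B + star B) * (A * Y) := by
    rw [← mul_add, add_comm (star B), self_add_star', coe_commutes]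
  have hnorm : Y * (star B * B) = B * star B * Y := by
    rw [star_comm_self, self_mul_star, coe_commutes]
  calc A * (A * Y - Y * star B) - (A * Y - Y * star B) * B
      = A ^ 2 * Y - (A * Y * star B + A * Y * B) + Y * (star B * B) := by noncomm_ring
    _ = (A ^ 2 - (B + star B) * A + B * star B) * Y := by rw [htrace, hnorm]; noncomm_ring

theorem sylvester_star_comp_sylvester (Y : ℍ[R]) :
    A * (A * Y - Y * B) - (A * Y - Y * B) * star B =
      (A ^ 2 - (B + star B) * A + B * star B) * Y := by
  have h := sylvester_comp_sylvester_star A (star B) Y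
  rwa [star_star, add_comm (star B), star_comm_self] at h

end CommRing

theorem sylvester_eq_iff {R : Type*} [Field R] [LinearOrder R] [IsStrictOrderedRing R]
    {A B C X : ℍ[R]} (hD : A ^ 2 - (B + star B) * A + B * star B ≠ 0) :
    A * X - X * B = C ↔
      X = (A ^ 2 - (B + star B) * A + B * star B)⁻¹ * (A * C - C * star B) := by
  constructor
  · rintro rfl
    rw [sylvester_star_comp_sylvester, inv_mul_cancel_left₀ hD]
  · rintro rfl
    have hcomm := (commute_sq_sub_add_star_mul_add_mul_star A B).inv_right₀
    have hshift : ∀ Y, A * ((A ^ 2 - (B + star B) * A + B * star B)⁻¹ * Y) -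
        (A ^ 2 - (B + star B) * A + B * star B)⁻¹ * Y * B =
          (A ^ 2 - (B + star B) * A + B * star B)⁻¹ * (A * Y - Y * B) := fun Y => by
      rw [mul_sub, ← mul_assoc, hcomm.eq, mul_assoc, mul_assoc]
    rw [hshift, sylvester_comp_sylvester_star, inv_mul_cancel_left₀ hD]

end Quaternion

theorem stmt_2 (K L M N P : Quaternion ℝ) (hM : M ≠ 0) (hL : L ≠ 0)
    (A B C D : Quaternion ℝ)
    (hA : A = M⁻¹ * K) (hB : B = -(N * L⁻¹)) (hC : C = M⁻¹ * P * L⁻¹)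
    (hD : D = A ^ 2 - (B + star B) * A + B * star B)
    (hD0 : D ≠ 0) :
    K * (D⁻¹ * (A * C - C * star B)) * L + M * (D⁻¹ * (A * C - C * star B)) * N = P ∧
      ∀ X : Quaternion ℝ, K * X * L + M * X * N = P →
        X = D⁻¹ * (A * C - C * star B) := by
  subst hA hB hC hD
  simp only [mul_mul_add_mul_mul_eq_iff hM hL]
  exact ⟨(Quaternion.sylvester_eq_iff hD0).2 rfl, fun X => (Quaternion.sylvester_eq_iff hD0).1⟩
end

section
/- Let A, C be real quaternions and set D := A² + (A + star A)·A + (star A)·A. If D ≠ 0, then X := D⁻¹·(A·C + C·A) is the unique quaternion satisfying the Lyapunov equation A·X + X·(star A) = C. -/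
/-!
Write `L X = A X + X Ā` and `M Y = A Y + Y A`. Since `A + Ā` and `Ā A = A Ā` are real, both
`M ∘ L` and `L ∘ M` are left multiplication by `D = A² + (A + Ā) A + Ā A`, and `D` commutes with
`A`. Hence, when `D ≠ 0`, `D⁻¹ M` is a two-sided inverse of `L`.
-/

namespace QuaternionAlgebra

variable {R : Type*} [CommRing R] {c₁ c₂ c₃ : R} (a x : QuaternionAlgebra R c₁ c₂ c₃)

theorem commute_self_add_star : Commute (a + star a) x := by
  rw [self_add_star']
  exact coe_commute _ _

theorem commute_star_mul_self : Commute (star a * a) x := by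
  rw [star_mul_eq_coe]
  exact coe_commute _ _

theorem commute_lyapunov_denom : Commute a (a ^ 2 + (a + star a) * a + star a * a) :=
  (((Commute.refl a).pow_right 2).add_right
    ((commute_self_add_star a a).symm.mul_right (Commute.refl a))).add_right
    (commute_star_mul_self a a).symm

theorem anticommutator_lyapunov :
    a * (a * x + x * star a) + (a * x + x * star a) * a
      = (a ^ 2 + (a + star a) * a + star a * a) * x :=
  calc a * (a * x + x * star a) + (a * x + x * star a) * a
      = a ^ 2 * x + a * x * (a + star a) + x * (star a * a) := by noncomm_ring
    _ = a ^ 2 * x + (a + star a) * (a * x) + star a * a * x := by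
        rw [(commute_self_add_star a (a * x)).eq, (commute_star_mul_self a x).eq]
    _ = (a ^ 2 + (a + star a) * a + star a * a) * x := by noncomm_ring

theorem lyapunov_anticommutator :
    a * (a * x + x * a) + (a * x + x * a) * star a
      = (a ^ 2 + (a + star a) * a + star a * a) * x :=
  calc a * (a * x + x * a) + (a * x + x * a) * star a
      = a ^ 2 * x + a * x * (a + star a) + x * (a * star a) := by noncomm_ring
    _ = a ^ 2 * x + (a + star a) * (a * x) + star a * a * x := by
        rw [(commute_self_add_star a (a * x)).eq, ← star_comm_self',
          (commute_star_mul_self a x).eq]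
    _ = (a ^ 2 + (a + star a) * a + star a * a) * x := by noncomm_ring

end QuaternionAlgebra

theorem stmt_3 (A C : Quaternion ℝ)
    (D : Quaternion ℝ) (hD : D = A ^ 2 + (A + star A) * A + star A * A)
    (hD0 : D ≠ 0) :
    A * (D⁻¹ * (A * C + C * A)) + (D⁻¹ * (A * C + C * A)) * star A = C ∧
      ∀ X : Quaternion ℝ, A * X + X * star A = C → X = D⁻¹ * (A * C + C * A) := by
  -- `Quaternion ℝ` is a non-reducible copy of `QuaternionAlgebra ℝ (-1) 0 (-1)`, so the lemmas
  -- are restated here by defeq rather than rewritten with.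
  have hAD : Commute A D := hD ▸ QuaternionAlgebra.commute_lyapunov_denom A
  have hLM : A * (A * C + C * A) + (A * C + C * A) * star A = D * C :=
    hD ▸ QuaternionAlgebra.lyapunov_anticommutator A C
  have hML : ∀ X, A * (A * X + X * star A) + (A * X + X * star A) * A = D * X :=
    fun X ↦ hD ▸ QuaternionAlgebra.anticommutator_lyapunov A X
  constructor
  · calc A * (D⁻¹ * (A * C + C * A)) + (D⁻¹ * (A * C + C * A)) * star A
        = D⁻¹ * (A * (A * C + C * A) + (A * C + C * A) * star A) := by
          rw [← mul_assoc, hAD.inv_right₀.eq]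
          noncomm_ring
      _ = C := by rw [hLM, inv_mul_cancel_left₀ hD0]
  · intro X hX
    rw [eq_inv_mul_iff_mul_eq₀ hD0, ← hX, hML]
end

section
/- Let V be a real vector space with finrank V = 1 and Q a quadratic form on V. Then for every B in the Clifford algebra Cl(Q), the product B·(involute B) lies in the range of the structure map algebraMap ℝ → Cl(Q), and B·(involute B) = (involute B)·B. -/
open CliffordAlgebra

/-!
When `V` is spanned by a single vector `v`, the product of two vectors `(x • v) (y • v)` is the
scalar `x y Q(v)`, so `R ⊕ ι V` is already closed under multiplication and exhausts `Cl(Q)`.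
For `B = r + ι m` both `B · involute B` and `involute B · B` equal `r² - Q(m)`, because the cross
terms `± r ι m` cancel.
-/

namespace CliffordAlgebra

variable {R M : Type*} [CommRing R] [AddCommGroup M] [Module R M] {Q : QuadraticForm R M}

theorem exists_ι_mul_ι_eq_algebraMap_of_span_singleton_eq_top {v : M}
    (hv : Submodule.span R {v} = ⊤) (m m' : M) :
    ∃ r : R, ι Q m * ι Q m' = algebraMap R _ r := by
  obtain ⟨a, rfl⟩ := Submodule.mem_span_singleton.mp (hv ▸ Submodule.mem_top : m ∈ _)
  obtain ⟨b, rfl⟩ := Submodule.mem_span_singleton.mp (hv ▸ Submodule.mem_top : m' ∈ _)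
  refine ⟨a * b * Q v, ?_⟩
  rw [map_smul, map_smul, smul_mul_smul_comm, ι_sq_scalar, Algebra.smul_def, ← map_mul]

theorem exists_eq_algebraMap_add_ι
    (hι : ∀ m m' : M, ∃ r : R, ι Q m * ι Q m' = algebraMap R _ r) (x : CliffordAlgebra Q) :
    ∃ (r : R) (m : M), x = algebraMap R _ r + ι Q m := by
  induction x using CliffordAlgebra.induction with
  | algebraMap r => exact ⟨r, 0, by simp⟩
  | ι m => exact ⟨0, m, by simp⟩
  | add x y hx hy =>
    obtain ⟨a, m, rfl⟩ := hx
    obtain ⟨b, m', rfl⟩ := hy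
    exact ⟨a + b, m + m', by rw [map_add, map_add]; abel⟩
  | mul x y hx hy =>
    obtain ⟨a, m, rfl⟩ := hx
    obtain ⟨b, m', rfl⟩ := hy
    obtain ⟨c, hc⟩ := hι m m'
    refine ⟨a * b + c, a • m' + b • m, ?_⟩
    simp only [map_add, map_mul, map_smul, Algebra.smul_def, mul_add, add_mul, hc,
      Algebra.commutes b]
    abel

theorem algebraMap_add_ι_mul_involute (r : R) (m : M) :
    (algebraMap R _ r + ι Q m) * involute (algebraMap R _ r + ι Q m) =
      algebraMap R _ (r * r - Q m) := by
  simp only [map_add, AlgHom.commutes, involute_ι, mul_add, add_mul, mul_neg, ι_sq_scalar,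
    Algebra.commutes r, map_sub, map_mul]
  abel

theorem involute_mul_algebraMap_add_ι (r : R) (m : M) :
    involute (algebraMap R _ r + ι Q m) * (algebraMap R _ r + ι Q m) =
      algebraMap R _ (r * r - Q m) := by
  simp only [map_add, AlgHom.commutes, involute_ι, mul_add, add_mul, neg_mul, ι_sq_scalar,
    Algebra.commutes r, map_sub, map_mul]
  abel

end CliffordAlgebra

theorem stmt_5 (V : Type*) [AddCommGroup V] [Module ℝ V]
    (hV : Module.finrank ℝ V = 1) (Q : QuadraticForm ℝ V)
    (B : CliffordAlgebra Q) :
    B * involute B ∈ Set.range (algebraMap ℝ (CliffordAlgebra Q)) ∧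
      B * involute B = involute B * B := by
  obtain ⟨v, -, hv⟩ := finrank_eq_one_iff'.mp hV
  have hspan : Submodule.span ℝ {v} = ⊤ := (Submodule.span_singleton_eq_top_iff ℝ v).mpr hv
  obtain ⟨r, m, rfl⟩ :=
    exists_eq_algebraMap_add_ι (exists_ι_mul_ι_eq_algebraMap_of_span_singleton_eq_top hspan) B
  rw [algebraMap_add_ι_mul_involute, involute_mul_algebraMap_add_ι]
  exact ⟨⟨_, rfl⟩, rfl⟩
end

section
/- Let V be a real vector space with finrank V = 1, Q a quadratic form on V, and A, B, C elements of the Clifford algebra Cl(Q). Set D := A − B and suppose D·(involute D) = algebraMap q for some real number q ≠ 0. Then X := q⁻¹ • ((involute D)·C) is the unique element of Cl(Q) satisfying A·X − X·B = C. -/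
/-!
On a line every vector is a multiple of one `v`, so the generators `ι Q w` commute pairwise and
`Cl(Q)` is commutative. Then `A X - X B = (A - B) X = D X`, and since `D` and `involute D` commute
with product `q ≠ 0`, the element `q⁻¹ • involute D` is a two-sided inverse of `D`.
-/

open CliffordAlgebra

namespace CliffordAlgebra

variable {R M : Type*} [CommRing R] [AddCommGroup M] [Module R M] {Q : QuadraticForm R M}

theorem commute_ι_ι_of_forall_exists_smul_eq {v : M} (hv : ∀ w : M, ∃ c : R, c • v = w)
    (u w : M) : Commute (ι Q u) (ι Q w) := by
  obtain ⟨a, rfl⟩ := hv u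
  obtain ⟨b, rfl⟩ := hv w
  simp only [map_smul]
  exact ((Commute.refl _).smul_left a).smul_right b

theorem mul_comm_of_forall_exists_smul_eq {v : M} (hv : ∀ w : M, ∃ c : R, c • v = w)
    (x y : CliffordAlgebra Q) : x * y = y * x := by
  have mem_adjoin (z : CliffordAlgebra Q) : z ∈ Algebra.adjoin R (Set.range (ι Q)) :=
    adjoin_range_ι (Q := Q) ▸ Algebra.mem_top
  have commute_ι (w : M) (z : CliffordAlgebra Q) : Commute (ι Q w) z :=
    Algebra.commute_of_mem_adjoin_of_forall_mem_commute (mem_adjoin z) <| by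
      rintro _ ⟨u, rfl⟩
      exact commute_ι_ι_of_forall_exists_smul_eq hv w u
  exact Algebra.commute_of_mem_adjoin_of_forall_mem_commute (mem_adjoin y) <| by
    rintro _ ⟨w, rfl⟩
    exact (commute_ι w x).symm

end CliffordAlgebra

theorem mul_eq_iff_eq_smul_of_mul_eq_algebraMap {K A : Type*} [Field K] [Ring A] [Algebra K A]
    {D E : A} {q : K} (hq : q ≠ 0) (hDE : D * E = algebraMap K A q)
    (hED : E * D = algebraMap K A q) (X C : A) : D * X = C ↔ X = q⁻¹ • (E * C) := by
  constructor
  · rintro rfl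
    rw [← mul_assoc, hED, Algebra.algebraMap_eq_smul_one, smul_mul_assoc, one_mul,
      inv_smul_smul₀ hq]
  · rintro rfl
    rw [mul_smul_comm, ← mul_assoc, hDE, Algebra.algebraMap_eq_smul_one, smul_mul_assoc,
      one_mul, inv_smul_smul₀ hq]

theorem stmt_6 (V : Type*) [AddCommGroup V] [Module ℝ V]
    (hV : Module.finrank ℝ V = 1) (Q : QuadraticForm ℝ V)
    (A B C : CliffordAlgebra Q) (D : CliffordAlgebra Q) (hD : D = A - B)
    (q : ℝ) (hq : q ≠ 0)
    (hdet : D * involute D = algebraMap ℝ (CliffordAlgebra Q) q) :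
    A * (q⁻¹ • (involute D * C)) - (q⁻¹ • (involute D * C)) * B = C ∧
      ∀ X : CliffordAlgebra Q, A * X - X * B = C → X = q⁻¹ • (involute D * C) := by
  obtain ⟨v, -, hv⟩ := finrank_eq_one_iff'.mp hV
  have hcomm := mul_comm_of_forall_exists_smul_eq (Q := Q) hv
  have sylvester_eq (X : CliffordAlgebra Q) : A * X - X * B = D * X := by
    rw [hD, sub_mul, hcomm X B]
  have solve := mul_eq_iff_eq_smul_of_mul_eq_algebraMap hq hdet (hcomm _ D ▸ hdet)
  refine ⟨?_, fun X hX => (solve X C).mp (sylvester_eq X ▸ hX)⟩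
  rw [sylvester_eq, solve]
end

section
/- Let V be a real vector space with finrank V = 2 and Q a quadratic form on V. Then for every B in the Clifford algebra Cl(Q), the element B + involute (reverse B) lies in the range of the structure map algebraMap ℝ → Cl(Q). -/
/-!
Over a field of characteristic not 2 the form diagonalises, so `Q` is isometric to
`c₁ x² + c₂ y²` on `K × K`, whose Clifford algebra is the quaternion algebra `ℍ[K, c₁, 0, c₂]`,
with Clifford conjugation corresponding to quaternion conjugation. In a quaternion algebra
`q + q̄ = 2 Re q` is a scalar, and isometries transport this property.
-/

open CliffordAlgebra

namespace CliffordAlgebra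

variable {R M₁ M₂ : Type*} [CommRing R] [AddCommGroup M₁] [AddCommGroup M₂] [Module R M₁]
  [Module R M₂] {Q₁ : QuadraticForm R M₁} {Q₂ : QuadraticForm R M₂}

theorem map_star (f : Q₁ →qᵢ Q₂) (x : CliffordAlgebra Q₁) :
    map f (star x) = star (map f x) := by
  induction x using CliffordAlgebra.induction with
  | algebraMap r => simp
  | ι m => simp
  | mul x y hx hy => simp [hx, hy]
  | add x y hx hy => simp [hx, hy]

theorem self_add_star_mem_range_of_isometryEquiv (e : Q₁.IsometryEquiv Q₂)
    (h : ∀ y : CliffordAlgebra Q₂, y + star y ∈ Set.range (algebraMap R (CliffordAlgebra Q₂)))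
    (x : CliffordAlgebra Q₁) : x + star x ∈ Set.range (algebraMap R (CliffordAlgebra Q₁)) := by
  obtain ⟨r, hr⟩ := h (equivOfIsometry e x)
  refine ⟨r, (equivOfIsometry e).injective ?_⟩
  rw [AlgEquiv.commutes, hr, map_add]
  exact congrArg _ (map_star _ x).symm

end CliffordAlgebra

namespace CliffordAlgebraQuaternion

open QuaternionAlgebra

variable {R : Type*} [CommRing R]

theorem self_add_star_mem_range {c₁ c₂ : R} (x : CliffordAlgebra (Q c₁ c₂)) :
    x + star x ∈ Set.range (algebraMap R (CliffordAlgebra (Q c₁ c₂))) := by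
  obtain ⟨q, rfl⟩ : ∃ q, ofQuaternion q = x := ⟨toQuaternion x, ofQuaternion_toQuaternion x⟩
  refine ⟨2 * q.re, ?_⟩
  rw [← ofQuaternion_star, ← map_add, self_add_star', zero_mul, add_zero]
  exact (ofQuaternion.commutes _).symm

def weightedSumSquaresFinTwoIsometryEquiv (w : Fin 2 → R) :
    (QuadraticMap.weightedSumSquares R w).IsometryEquiv (Q (w 0) (w 1)) where
  toLinearEquiv := LinearEquiv.piFinTwo R fun _ => R
  map_app' v := by simp [Fin.sum_univ_two]

theorem exists_equivalent_Q_of_finrank_eq_two {K V : Type*} [Field K] [Invertible (2 : K)]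
    [AddCommGroup V] [Module K V] (hV : Module.finrank K V = 2) (Q' : QuadraticForm K V) :
    ∃ c₁ c₂ : K, Q'.Equivalent (Q c₁ c₂) := by
  have : FiniteDimensional K V := Module.finite_of_finrank_eq_succ hV
  obtain ⟨w, hw⟩ := Q'.equivalent_weightedSumSquares
  revert w
  rw [hV]
  exact fun w hw => ⟨w 0, w 1, hw.trans ⟨weightedSumSquaresFinTwoIsometryEquiv w⟩⟩

end CliffordAlgebraQuaternion

theorem stmt_7 (V : Type*) [AddCommGroup V] [Module ℝ V]
    (hV : Module.finrank ℝ V = 2) (Q : QuadraticForm ℝ V)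
    (B : CliffordAlgebra Q) :
    B + involute (reverse B) ∈ Set.range (algebraMap ℝ (CliffordAlgebra Q)) := by
  obtain ⟨c₁, c₂, ⟨e⟩⟩ := CliffordAlgebraQuaternion.exists_equivalent_Q_of_finrank_eq_two hV Q
  rw [← star_def']
  exact self_add_star_mem_range_of_isometryEquiv e
    CliffordAlgebraQuaternion.self_add_star_mem_range B
end

section
/- Let V be a real vector space with finrank V = 2 and Q a quadratic form on V. Then for every B in the Clifford algebra Cl(Q), the product B·(involute (reverse B)) lies in the range of the structure map algebraMap ℝ → Cl(Q), and moreover B·(involute (reverse B)) = (involute (reverse B))·B. -/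
/-!
Write `B̄ = star B` for the Clifford conjugate. In dimension two the algebra is spanned by
`1, x, y, xy` for a basis `x, y` of `V`, and on each of these `B + B̄` is a scalar
(`xy + yx` is the polar form). Once `B + B̄ = s` is central, `B B̄ = sB - B² = B̄ B`; and since
`B B̄` is self-conjugate, `2 B B̄ = B B̄ + star (B B̄)` is a scalar as well.
-/

open CliffordAlgebra

section Scalars

variable {R A : Type*} [CommRing R] [Ring A] [Algebra R A]

theorem mul_star_comm_of_add_star_mem_range [StarRing A] {a : A}
    (h : a + star a ∈ Set.range (algebraMap R A)) : a * star a = star a * a := by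
  obtain ⟨r, hr⟩ := h
  rw [eq_sub_of_add_eq' hr.symm, mul_sub, sub_mul, Algebra.commutes]

theorem mem_range_algebraMap_of_add_self_mem [Invertible (2 : R)] {z : A}
    (h : z + z ∈ Set.range (algebraMap R A)) : z ∈ Set.range (algebraMap R A) := by
  obtain ⟨r, hr⟩ := h
  refine ⟨⅟2 * r, ?_⟩
  rw [map_mul, hr, ← two_mul, ← mul_assoc, ← map_ofNat (algebraMap R A) 2, ← map_mul,
    invOf_mul_self, map_one, one_mul]

end Scalars

namespace CliffordAlgebra

variable {R M : Type*} [CommRing R] [AddCommGroup M] [Module R M] {Q : QuadraticForm R M}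

theorem ι_mul_ι_add_star (u v : M) :
    ι Q u * ι Q v + star (ι Q u * ι Q v) = algebraMap R _ (QuadraticMap.polar Q u v) := by
  rw [star_mul, star_ι, star_ι, neg_mul_neg, ι_mul_ι_add_swap]

theorem span_one_ι_ι_mul_eq_top (b : Module.Basis (Fin 2) R M) :
    Submodule.span R {1, ι Q (b 0), ι Q (b 1), ι Q (b 0) * ι Q (b 1)} = ⊤ := by
  set x := ι Q (b 0)
  set y := ι Q (b 1)
  set S := Submodule.span R {1, x, y, x * y}
  have one_mem : 1 ∈ S := Submodule.subset_span (by simp)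
  have x_mem : x ∈ S := Submodule.subset_span (by simp)
  have y_mem : y ∈ S := Submodule.subset_span (by simp)
  have xy_mem : x * y ∈ S := Submodule.subset_span (by simp)
  have algebraMap_mem (r : R) : algebraMap R _ r ∈ S := by
    rw [Algebra.algebraMap_eq_smul_one]
    exact S.smul_mem r one_mem
  have mul_mem_of_generators (c : CliffordAlgebra Q)
      (h : ∀ g ∈ ({1, x, y, x * y} : Set (CliffordAlgebra Q)), c * g ∈ S) :
      ∀ t ∈ S, c * t ∈ S := fun t ht =>
    (Submodule.span_le (p := S.comap (LinearMap.mulLeft R c))).2 h ht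
  have x_mul_mem : ∀ t ∈ S, x * t ∈ S := by
    refine mul_mem_of_generators x ?_
    simp only [Set.mem_insert_iff, Set.mem_singleton_iff, forall_eq_or_imp, forall_eq]
    refine ⟨by rwa [mul_one], by rw [ι_sq_scalar]; exact algebraMap_mem _, xy_mem, ?_⟩
    rw [← mul_assoc, ι_sq_scalar, ← Algebra.smul_def]
    exact S.smul_mem _ y_mem
  have y_mul_mem : ∀ t ∈ S, y * t ∈ S := by
    refine mul_mem_of_generators y ?_
    have yx : y * x = algebraMap R _ (QuadraticMap.polar Q (b 1) (b 0)) - x * y := by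
      rw [← ι_mul_ι_add_swap, add_sub_cancel_right]
    simp only [Set.mem_insert_iff, Set.mem_singleton_iff, forall_eq_or_imp, forall_eq]
    refine ⟨by rwa [mul_one], ?_, by rw [ι_sq_scalar]; exact algebraMap_mem _, ?_⟩
    · rw [yx]
      exact S.sub_mem (algebraMap_mem _) xy_mem
    · rw [← mul_assoc, yx, sub_mul, mul_assoc, ι_sq_scalar, ← Algebra.smul_def,
        ← Algebra.commutes, ← Algebra.smul_def]
      exact S.sub_mem (S.smul_mem _ y_mem) (S.smul_mem _ x_mem)
  have ι_mul_mem (m : M) : ∀ t ∈ S, ι Q m * t ∈ S := by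
    intro t ht
    rw [← b.sum_repr m, Fin.sum_univ_two, map_add, map_smul, map_smul, add_mul,
      smul_mul_assoc, smul_mul_assoc]
    exact S.add_mem (S.smul_mem _ (x_mul_mem t ht)) (S.smul_mem _ (y_mul_mem t ht))
  refine Submodule.eq_top_iff'.2 fun B => ?_
  induction B using left_induction with
  | algebraMap r => exact algebraMap_mem r
  | add _ _ hB hB' => exact S.add_mem hB hB'
  | ι_mul B m hB => exact ι_mul_mem m B hB

theorem add_star_mem_range_algebraMap (b : Module.Basis (Fin 2) R M) (B : CliffordAlgebra Q) :
    B + star B ∈ Set.range (algebraMap R (CliffordAlgebra Q)) := by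
  have hB := (span_one_ι_ι_mul_eq_top b).symm ▸ Submodule.mem_top (x := B)
  induction hB using Submodule.span_induction with
  | mem g hg =>
    rcases hg with rfl | rfl | rfl | rfl
    · exact ⟨2, by rw [star_one, map_ofNat, one_add_one_eq_two]⟩
    · exact ⟨0, by rw [star_ι, add_neg_cancel, map_zero]⟩
    · exact ⟨0, by rw [star_ι, add_neg_cancel, map_zero]⟩
    · exact ⟨_, (ι_mul_ι_add_star _ _).symm⟩
  | zero => exact ⟨0, by rw [star_zero, add_zero, map_zero]⟩
  | add B B' _ _ hB hB' =>
    obtain ⟨r, hr⟩ := hB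
    obtain ⟨r', hr'⟩ := hB'
    exact ⟨r + r', by rw [map_add, hr, hr', star_add, add_add_add_comm]⟩
  | smul c B _ hB =>
    obtain ⟨r, hr⟩ := hB
    exact ⟨c * r, by rw [star_smul, ← smul_add, ← hr, Algebra.smul_def, map_mul]⟩

end CliffordAlgebra

theorem stmt_8 (V : Type*) [AddCommGroup V] [Module ℝ V]
    (hV : Module.finrank ℝ V = 2) (Q : QuadraticForm ℝ V)
    (B : CliffordAlgebra Q) :
    B * involute (reverse B) ∈ Set.range (algebraMap ℝ (CliffordAlgebra Q)) ∧
      B * involute (reverse B) = involute (reverse B) * B := by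
  have : Module.Finite ℝ V := Module.finite_of_finrank_eq_succ hV
  let b := Module.finBasisOfFinrankEq ℝ V hV
  rw [← star_def']
  refine ⟨mem_range_algebraMap_of_add_self_mem ?_,
    mul_star_comm_of_add_star_mem_range (add_star_mem_range_algebraMap b B)⟩
  simpa only [(IsSelfAdjoint.mul_star_self B).star_eq] using
    add_star_mem_range_algebraMap b (B * star B)
end

section
/- Let V be a real vector space with finrank V = 2, Q a quadratic form on V, and B an element of the Clifford algebra Cl(Q). If B·(involute (reverse B)) = algebraMap q for some real number q ≠ 0, then B is a unit with two-sided inverse q⁻¹ • involute (reverse B); that is, B·(q⁻¹ • involute (reverse B)) = 1 and (q⁻¹ • involute (reverse B))·B = 1. -/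
open CliffordAlgebra

/- The hypothesis makes `q⁻¹ • involute (reverse B)` a right inverse of `B`. The Clifford algebra
of a finite-dimensional space is finite-dimensional (as a vector space it is the exterior
algebra), hence Artinian, hence Dedekind-finite, so a right inverse is also a left inverse. -/

theorem CliffordAlgebra.moduleFinite {K M : Type*} [Field K] [Invertible (2 : K)]
    [AddCommGroup M] [Module K M] [Module.Finite K M] (Q : QuadraticForm K M) :
    Module.Finite K (CliffordAlgebra Q) :=
  have : Module.Finite K (ExteriorAlgebra K M) :=
    .of_basis (Module.finBasis K M).ExteriorAlgebra
  .equiv (equivExterior Q).symm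

theorem CliffordAlgebra.mul_eq_one_comm {K M : Type*} [Field K] [Invertible (2 : K)]
    [AddCommGroup M] [Module K M] [Module.Finite K M] {Q : QuadraticForm K M}
    {a b : CliffordAlgebra Q} : a * b = 1 ↔ b * a = 1 :=
  have := CliffordAlgebra.moduleFinite Q
  have := IsArtinianRing.of_finite K (CliffordAlgebra Q)
  _root_.mul_eq_one_comm

theorem mul_inv_smul_eq_one_of_mul_eq_algebraMap {K A : Type*} [Field K] [Ring A] [Algebra K A]
    {a b : A} {q : K} (hq : q ≠ 0) (h : a * b = algebraMap K A q) : a * (q⁻¹ • b) = 1 := by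
  rw [mul_smul_comm, h, Algebra.smul_def, ← map_mul, inv_mul_cancel₀ hq, map_one]

theorem stmt_9 (V : Type*) [AddCommGroup V] [Module ℝ V]
    (hV : Module.finrank ℝ V = 2) (Q : QuadraticForm ℝ V)
    (B : CliffordAlgebra Q) (q : ℝ) (hq : q ≠ 0)
    (hdet : B * involute (reverse B) = algebraMap ℝ (CliffordAlgebra Q) q) :
    B * (q⁻¹ • involute (reverse B)) = 1 ∧
      (q⁻¹ • involute (reverse B)) * B = 1 := by
  have : Module.Finite ℝ V := Module.finite_of_finrank_eq_succ hV
  have hright := mul_inv_smul_eq_one_of_mul_eq_algebraMap hq hdet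
  exact ⟨hright, CliffordAlgebra.mul_eq_one_comm.mp hright⟩
end

section
/- Let V be a real vector space with finrank V = 2, Q a quadratic form on V, and A, B, C elements of the Clifford algebra Cl(Q). Set B̄ := involute (reverse B) and D := A² − A·(B + B̄) + B·B̄. If D·(involute (reverse D)) = algebraMap q for some real number q ≠ 0, then X := q⁻¹ • ((involute (reverse D))·(A·C − C·B̄)) is the unique element of Cl(Q) satisfying A·X − X·B = C. -/
/-!
Write `x̄ = star x` for the Clifford conjugate. Over a plane the Clifford algebra is spanned by
`1, e₁, e₂, e₁e₂`, on each of which `x + x̄` is a scalar; so `x + x̄` is a scalar for every `x`,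
and so is `x x̄`, half of the scalar `x x̄ + (x x̄)̄`. With `B + B̄` and `B B̄` central,
`D X = A (A X - X B) - (A X - X B) B̄` for every `X`, and `D` commutes with `A`. Since
`D̄ D = D D̄ = q`, `D` is invertible: this gives uniqueness, and existence follows because
`X ↦ A X - X B` and `X ↦ A X - X B̄` commute.
-/

open CliffordAlgebra

section Sylvester

variable {S : Type*} [Ring S] {A B B' D E : S}

theorem sylvester_sq_mul (hsum : ∀ X, Commute (B + B') X) (hprod : ∀ X, Commute (B * B') X)
    (X : S) :
    (A ^ 2 - A * (B + B') + B * B') * X = A * (A * X - X * B) - (A * X - X * B) * B' :=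
  calc (A ^ 2 - A * (B + B') + B * B') * X = A * (A * X) - A * ((B + B') * X) + B * B' * X := by
        noncomm_ring
    _ = A * (A * X) - A * (X * (B + B')) + X * (B * B') := by rw [(hsum X).eq, (hprod X).eq]
    _ = A * (A * X - X * B) - (A * X - X * B) * B' := by noncomm_ring

theorem sylvester_solution (hsum : ∀ X, Commute (B + B') X) (hprod : ∀ X, Commute (B * B') X)
    (hD : D = A ^ 2 - A * (B + B') + B * B') (hED : E * D = 1) (hDE : D * E = 1) (C : S) :
    A * (E * (A * C - C * B')) - E * (A * C - C * B') * B = C ∧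
      ∀ X, A * X - X * B = C → X = E * (A * C - C * B') := by
  refine ⟨?_, fun X hX => ?_⟩
  · have hAD : Commute A D := by
      rw [hD]
      exact (((Commute.refl A).pow_right 2).sub_right
        ((Commute.refl A).mul_right (hsum A).symm)).add_right (hprod A).symm
    have hAE : Commute A E :=
      calc A * E = E * D * A * E := by rw [hED, one_mul]
        _ = E * (A * D) * E := by rw [hAD.eq]; noncomm_ring
        _ = E * A := by rw [mul_assoc, mul_assoc, hDE, mul_one]
    -- `B'` commutes with `B` because `B' = (B + B') - B`.
    have hBB' : B' * B = B * B' := by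
      have := (hsum B).eq
      rwa [add_mul, mul_add, add_right_inj] at this
    calc A * (E * (A * C - C * B')) - E * (A * C - C * B') * B
        = E * (A * (A * C - C * B') - (A * C - C * B') * B) := by
          rw [← mul_assoc, hAE.eq]; noncomm_ring
      _ = E * (A * (A * C - C * B) - (A * C - C * B) * B') := by
          congr 1; simp only [mul_sub, sub_mul, mul_assoc, hBB']; abel
      _ = C := by rw [← sylvester_sq_mul hsum hprod, ← hD, ← mul_assoc, hED, one_mul]
  · calc X = E * (D * X) := by rw [← mul_assoc, hED, one_mul]
      _ = E * (A * C - C * B') := by rw [hD, sylvester_sq_mul hsum hprod, hX]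

end Sylvester

namespace CliffordAlgebra

variable {R M : Type*} [CommRing R] [AddCommGroup M] [Module R M] {Q : QuadraticForm R M}

theorem span_one_ι_ι_ι_mul_ι_eq_top {u v : M} (huv : Submodule.span R {u, v} = ⊤) :
    Submodule.span R {1, ι Q u, ι Q v, ι Q u * ι Q v} = ⊤ := by
  set S := Submodule.span R {1, ι Q u, ι Q v, ι Q u * ι Q v}
  have huu : ι Q u * ι Q u = Q u • 1 := by rw [ι_sq_scalar, Algebra.algebraMap_eq_smul_one]
  have hvv : ι Q v * ι Q v = Q v • 1 := by rw [ι_sq_scalar, Algebra.algebraMap_eq_smul_one]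
  have hvu : ι Q v * ι Q u = QuadraticMap.polar Q v u • 1 - ι Q u * ι Q v := by
    rw [ι_mul_ι_comm, Algebra.algebraMap_eq_smul_one]
  have huvv : ι Q u * ι Q v * ι Q v = Q v • ι Q u := by rw [mul_assoc, hvv, mul_smul_one]
  have hmul : ∀ w ∈ ({u, v} : Set M), S ≤ S.comap (LinearMap.mulLeft R (ι Q w)) := by
    intro w hw
    rw [Submodule.span_le]
    intro g hg
    simp only [Set.mem_insert_iff, Set.mem_singleton_iff] at hw hg
    rcases hw with rfl | rfl <;> rcases hg with rfl | rfl | rfl | rfl <;>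
      simp only [SetLike.mem_coe, Submodule.mem_comap, LinearMap.mulLeft_apply, mul_one,
        ← mul_assoc, huu, hvv, hvu, huvv, sub_mul, smul_one_mul] <;>
      repeat' first
        | apply Submodule.sub_mem | apply Submodule.smul_mem | apply Submodule.subset_span
    all_goals simp
  refine Submodule.eq_top_iff'.2 fun x => ?_
  induction x using left_induction with
  | algebraMap r =>
    rw [Algebra.algebraMap_eq_smul_one]
    exact S.smul_mem r (Submodule.subset_span (by simp))
  | add _ _ hx hy => exact add_mem hx hy
  | ι_mul x m hx =>
    obtain ⟨a, b, rfl⟩ := Submodule.mem_span_pair.1 (huv ▸ Submodule.mem_top (x := m))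
    rw [map_add, map_smul, map_smul, add_mul, smul_mul_assoc, smul_mul_assoc]
    exact add_mem (S.smul_mem a (hmul u (by simp) hx)) (S.smul_mem b (hmul v (by simp) hx))

theorem exists_add_star_eq_algebraMap {u v : M} (huv : Submodule.span R {u, v} = ⊤)
    (x : CliffordAlgebra Q) : ∃ r : R, x + star x = algebraMap R _ r := by
  have hx : x ∈ Submodule.span R {1, ι Q u, ι Q v, ι Q u * ι Q v} :=
    span_one_ι_ι_ι_mul_ι_eq_top huv ▸ Submodule.mem_top
  induction hx using Submodule.span_induction with
  | mem g hg =>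
    simp only [Set.mem_insert_iff, Set.mem_singleton_iff] at hg
    rcases hg with rfl | rfl | rfl | rfl
    · exact ⟨2, by rw [star_one, one_add_one_eq_two, map_ofNat]⟩
    · exact ⟨0, by rw [star_ι, add_neg_cancel, map_zero]⟩
    · exact ⟨0, by rw [star_ι, add_neg_cancel, map_zero]⟩
    · exact ⟨QuadraticMap.polar Q u v, by
        rw [star_mul, star_ι, star_ι, neg_mul_neg, ι_mul_ι_add_swap]⟩
  | zero => exact ⟨0, by rw [star_zero, add_zero, map_zero]⟩
  | add x y _ _ hx hy =>
    obtain ⟨r, hr⟩ := hx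
    obtain ⟨s, hs⟩ := hy
    exact ⟨r + s, by rw [star_add, map_add, ← hr, ← hs, add_add_add_comm]⟩
  | smul a x _ hx =>
    obtain ⟨r, hr⟩ := hx
    exact ⟨a * r, by rw [star_smul, ← smul_add, hr, map_mul, Algebra.smul_def]⟩

theorem exists_mul_star_eq_algebraMap [Invertible (2 : R)] {u v : M}
    (huv : Submodule.span R {u, v} = ⊤) (x : CliffordAlgebra Q) :
    ∃ r : R, x * star x = algebraMap R _ r := by
  obtain ⟨r, hr⟩ := exists_add_star_eq_algebraMap huv (x * star x)
  rw [star_mul, star_star, ← two_smul R] at hr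
  refine ⟨⅟2 * r, ?_⟩
  rw [map_mul, ← hr, ← Algebra.smul_def, smul_smul, invOf_mul_self, one_smul]

end CliffordAlgebra

theorem exists_span_pair_eq_top_of_finrank_eq_two {K V : Type*} [Field K] [AddCommGroup V]
    [Module K V] (h : Module.finrank K V = 2) : ∃ u v : V, Submodule.span K {u, v} = ⊤ := by
  have := Module.finite_of_finrank_eq_succ h
  let b := Module.finBasisOfFinrankEq K V h
  refine ⟨b 0, b 1, Submodule.eq_top_iff'.2 fun x =>
    Submodule.mem_span_pair.2 ⟨b.repr x 0, b.repr x 1, ?_⟩⟩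
  have := b.sum_repr x
  rwa [Fin.sum_univ_two] at this

theorem stmt_11 (V : Type*) [AddCommGroup V] [Module ℝ V]
    (hV : Module.finrank ℝ V = 2) (Q : QuadraticForm ℝ V)
    (A B C : CliffordAlgebra Q) (D : CliffordAlgebra Q)
    (hD : D = A ^ 2 - A * (B + involute (reverse B)) + B * involute (reverse B))
    (q : ℝ) (hq : q ≠ 0)
    (hdet : D * involute (reverse D) = algebraMap ℝ (CliffordAlgebra Q) q) :
    A * (q⁻¹ • (involute (reverse D) * (A * C - C * involute (reverse B)))) -
        (q⁻¹ • (involute (reverse D) * (A * C - C * involute (reverse B)))) * B = C ∧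
      ∀ X : CliffordAlgebra Q, A * X - X * B = C →
        X = q⁻¹ • (involute (reverse D) * (A * C - C * involute (reverse B))) := by
  simp only [← star_def'] at hD hdet ⊢
  obtain ⟨u, v, huv⟩ := exists_span_pair_eq_top_of_finrank_eq_two hV
  obtain ⟨t, hBt⟩ := exists_add_star_eq_algebraMap (Q := Q) huv B
  obtain ⟨n, hBn⟩ := exists_mul_star_eq_algebraMap (Q := Q) huv B
  obtain ⟨s, hDs⟩ := exists_add_star_eq_algebraMap (Q := Q) huv D
  have hstarD : star D * D = algebraMap ℝ _ q := by
    rw [← hdet, eq_sub_of_add_eq' hDs, sub_mul, mul_sub, Algebra.commutes]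
  rw [← smul_mul_assoc q⁻¹ (star D)]
  exact sylvester_solution
    (hBt ▸ Algebra.commute_algebraMap_left t) (hBn ▸ Algebra.commute_algebraMap_left n) hD
    (by rw [smul_mul_assoc q⁻¹ (star D) D, hstarD, Algebra.algebraMap_eq_smul_one, smul_smul,
      inv_mul_cancel₀ hq, one_smul])
    (by rw [mul_smul_comm q⁻¹ D (star D), hdet, Algebra.algebraMap_eq_smul_one, smul_smul,
      inv_mul_cancel₀ hq, one_smul]) C
end

section
/- Let V be a real vector space with finrank V = 3 and Q a quadratic form on V. Then for every B in the Clifford algebra Cl(Q), the element B + involute (reverse B) lies in the center of Cl(Q). -/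
/-!
Take a `Q`-orthogonal basis `x, y, z` of `V`. The monomials `x^a y^b z^c` span `Cl(Q)`, and
Clifford conjugation multiplies such a monomial by `(-1)^(a+b+c + ab+bc+ca)`. So `B + B̄` only
retains the monomials with an even exponent here, and these are exactly the ones with
`a ≡ b ≡ c (mod 2)`. Such a monomial commutes with each of `x`, `y`, `z`, so it is central.
-/

section SignedCommute

variable {A : Type*} [Ring A]

-- Commuting (`i = 0`) and anticommuting (`i = 1`) pairs are handled uniformly.
theorem mul_mul_eq_neg_one_pow_smul {u x y : A} {i j : ℕ}
    (hx : u * x = (-1 : ℤ) ^ i • (x * u)) (hy : u * y = (-1 : ℤ) ^ j • (y * u)) :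
    u * (x * y) = (-1 : ℤ) ^ (i + j) • (x * y * u) := by
  rw [← mul_assoc, hx, smul_mul_assoc, mul_assoc, hy, mul_smul_comm, smul_smul, ← pow_add,
    mul_assoc]

theorem mul_pow_eq_neg_one_pow_smul {x y : A} {i : ℕ} (h : y * x = (-1 : ℤ) ^ i • (x * y))
    (n : ℕ) : y * x ^ n = (-1 : ℤ) ^ (i * n) • (x ^ n * y) := by
  induction n with
  | zero => simp
  | succ n ih => rw [pow_succ, mul_mul_eq_neg_one_pow_smul ih h, mul_add_one]

theorem pow_mul_pow_eq_neg_one_pow_smul {x y : A} {i : ℕ} (h : y * x = (-1 : ℤ) ^ i • (x * y))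
    (m n : ℕ) : y ^ m * x ^ n = (-1 : ℤ) ^ (i * n * m) • (x ^ n * y ^ m) := by
  induction m with
  | zero => simp
  | succ m ih =>
    rw [pow_succ, mul_assoc, mul_pow_eq_neg_one_pow_smul h, mul_smul_comm, ← mul_assoc, ih,
      smul_mul_assoc, smul_smul, ← pow_add, mul_assoc (x ^ n),
      show i * n + i * n * m = i * n * (m + 1) by ring]

theorem mul_pow_mul_pow_mul_pow_eq_neg_one_pow_smul {u x y z : A} {i j k : ℕ}
    (hx : u * x = (-1 : ℤ) ^ i • (x * u)) (hy : u * y = (-1 : ℤ) ^ j • (y * u))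
    (hz : u * z = (-1 : ℤ) ^ k • (z * u)) (a b c : ℕ) :
    u * (x ^ a * y ^ b * z ^ c) =
      (-1 : ℤ) ^ (i * a + j * b + k * c) • (x ^ a * y ^ b * z ^ c * u) :=
  mul_mul_eq_neg_one_pow_smul
    (mul_mul_eq_neg_one_pow_smul (mul_pow_eq_neg_one_pow_smul hx a)
      (mul_pow_eq_neg_one_pow_smul hy b))
    (mul_pow_eq_neg_one_pow_smul hz c)

theorem pow_mul_pow_mul_pow_reverse {x y z : A} (hyx : y * x = (-1 : ℤ) ^ 1 • (x * y))
    (hzx : z * x = (-1 : ℤ) ^ 1 • (x * z)) (hzy : z * y = (-1 : ℤ) ^ 1 • (y * z))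
    (a b c : ℕ) :
    z ^ c * y ^ b * x ^ a = (-1 : ℤ) ^ (a * b + b * c + c * a) • (x ^ a * y ^ b * z ^ c) :=
  calc z ^ c * y ^ b * x ^ a = z ^ c * (y ^ b * x ^ a) := mul_assoc ..
    _ = (-1 : ℤ) ^ (a * b) • (z ^ c * x ^ a * y ^ b) := by
      rw [pow_mul_pow_eq_neg_one_pow_smul hyx, one_mul, mul_smul_comm, mul_assoc]
    _ = (-1 : ℤ) ^ (a * b) • (-1 : ℤ) ^ (a * c) • (x ^ a * (z ^ c * y ^ b)) := by
      rw [pow_mul_pow_eq_neg_one_pow_smul hzx, one_mul, smul_mul_assoc, mul_assoc]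
    _ = (-1 : ℤ) ^ (a * b) • (-1 : ℤ) ^ (a * c) • (-1 : ℤ) ^ (b * c) •
          (x ^ a * y ^ b * z ^ c) := by
      rw [pow_mul_pow_eq_neg_one_pow_smul hzy, one_mul, mul_smul_comm, mul_assoc]
    _ = _ := by
      rw [smul_smul, smul_smul, ← pow_add, ← pow_add]
      ring_nf

end SignedCommute

namespace CliffordAlgebra

variable {R M : Type*} [CommRing R] [AddCommGroup M] [Module R M] {Q : QuadraticForm R M}

theorem adjoin_image_ι_eq_top {s : Set M} (hs : Submodule.span R s = ⊤) :
    Algebra.adjoin R (ι Q '' s) = ⊤ := by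
  refine eq_top_iff.2 (adjoin_range_ι (Q := Q) ▸ Algebra.adjoin_le ?_)
  rintro _ ⟨v, rfl⟩
  have hv : ι Q v ∈ (Submodule.span R s).map (ι Q) := Submodule.mem_map_of_mem (hs ▸ trivial)
  rw [← Submodule.span_image] at hv
  exact Algebra.span_le_adjoin R _ hv

theorem submodule_eq_top_of_ι_mul_mem {s : Set M} (hs : Submodule.span R s = ⊤)
    {S : Submodule R (CliffordAlgebra Q)} (h1 : 1 ∈ S)
    (hmul : ∀ v ∈ s, ∀ u ∈ S, ι Q v * u ∈ S) : S = ⊤ := by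
  suffices ∀ a, ∀ u ∈ S, a * u ∈ S from eq_top_iff.2 fun a _ => mul_one a ▸ this a 1 h1
  intro a
  have ha : a ∈ Algebra.adjoin R (ι Q '' s) := adjoin_image_ι_eq_top hs ▸ trivial
  induction ha using Algebra.adjoin_induction with
  | mem _ hx => obtain ⟨v, hv, rfl⟩ := hx; exact hmul v hv
  | algebraMap r => exact fun u hu => Algebra.smul_def r u ▸ S.smul_mem r hu
  | add x y _ _ hx hy => exact fun u hu => (add_mul x y u).symm ▸ S.add_mem (hx u hu) (hy u hu)
  | mul x y _ _ hx hy => exact fun u hu => (mul_assoc x y u).symm ▸ hx _ (hy u hu)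

theorem mem_center_of_commute_ι {s : Set M} (hs : Submodule.span R s = ⊤)
    {z : CliffordAlgebra Q} (h : ∀ v ∈ s, Commute (ι Q v) z) :
    z ∈ Subalgebra.center R (CliffordAlgebra Q) := by
  refine Subalgebra.mem_center_iff.2 fun a => ?_
  have ha : a ∈ Algebra.adjoin R (ι Q '' s) := adjoin_image_ι_eq_top hs ▸ trivial
  exact (Algebra.commute_of_mem_adjoin_of_forall_mem_commute ha
    (by rintro _ ⟨v, hv, rfl⟩; exact (h v hv).symm)).symm.eq

theorem ι_mul_ι_eq_neg_one_pow_smul {a b : M} (h : Q.IsOrtho a b) :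
    ι Q a * ι Q b = (-1 : ℤ) ^ 1 • (ι Q b * ι Q a) := by
  rw [pow_one, neg_one_zsmul, ι_mul_ι_comm_of_isOrtho h]

theorem star_ι_pow (v : M) (n : ℕ) : star (ι Q v ^ n) = (-1 : ℤ) ^ n • ι Q v ^ n := by
  rw [star_pow, star_ι, neg_pow, zsmul_eq_mul]
  push_cast
  rfl

variable (Q) in
def ιMonomial (x y z : M) (a b c : ℕ) : CliffordAlgebra Q := ι Q x ^ a * ι Q y ^ b * ι Q z ^ c

section

variable {x y z : M}

theorem star_ιMonomial (hxy : Q.IsOrtho x y) (hxz : Q.IsOrtho x z) (hyz : Q.IsOrtho y z)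
    (a b c : ℕ) :
    star (ιMonomial Q x y z a b c) =
      (-1 : ℤ) ^ (a + b + c + (a * b + b * c + c * a)) • ιMonomial Q x y z a b c := by
  calc star (ιMonomial Q x y z a b c)
      = (-1 : ℤ) ^ (a + b + c) • (ι Q z ^ c * ι Q y ^ b * ι Q x ^ a) := by
        simp only [ιMonomial, star_mul, star_ι_pow, smul_mul_assoc, mul_smul_comm, smul_smul,
          ← pow_add, mul_assoc]
        ring_nf
    _ = _ := by
      rw [pow_mul_pow_mul_pow_reverse (ι_mul_ι_eq_neg_one_pow_smul hxy.symm)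
        (ι_mul_ι_eq_neg_one_pow_smul hxz.symm) (ι_mul_ι_eq_neg_one_pow_smul hyz.symm),
        smul_smul, ← pow_add, ιMonomial]

theorem ιMonomial_mem_center (hxy : Q.IsOrtho x y) (hxz : Q.IsOrtho x z)
    (hyz : Q.IsOrtho y z) (hspan : Submodule.span R {x, y, z} = ⊤) {a b c : ℕ}
    (hab : Even (a + b)) (hbc : Even (b + c)) :
    ιMonomial Q x y z a b c ∈ Subalgebra.center R (CliffordAlgebra Q) := by
  have hac : Even (a + c) := Nat.even_add.2 ((Nat.even_add.1 hab).trans (Nat.even_add.1 hbc))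
  have hself (w : M) : ι Q w * ι Q w = (-1 : ℤ) ^ 0 • (ι Q w * ι Q w) := by
    rw [pow_zero, one_smul]
  refine mem_center_of_commute_ι hspan ?_
  rintro v (rfl | rfl | rfl) <;> unfold Commute SemiconjBy ιMonomial
  · rw [mul_pow_mul_pow_mul_pow_eq_neg_one_pow_smul (hself _)
      (ι_mul_ι_eq_neg_one_pow_smul hxy) (ι_mul_ι_eq_neg_one_pow_smul hxz)]
    simp [hbc.neg_one_pow]
  · rw [mul_pow_mul_pow_mul_pow_eq_neg_one_pow_smul (ι_mul_ι_eq_neg_one_pow_smul hxy.symm)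
      (hself _) (ι_mul_ι_eq_neg_one_pow_smul hyz)]
    simp [hac.neg_one_pow]
  · rw [mul_pow_mul_pow_mul_pow_eq_neg_one_pow_smul (ι_mul_ι_eq_neg_one_pow_smul hxz.symm)
      (ι_mul_ι_eq_neg_one_pow_smul hyz.symm) (hself _)]
    simp [hab.neg_one_pow]

theorem span_range_ιMonomial (hxy : Q.IsOrtho x y) (hxz : Q.IsOrtho x z)
    (hyz : Q.IsOrtho y z) (hspan : Submodule.span R {x, y, z} = ⊤) :
    Submodule.span R
      (Set.range fun k : ℕ × ℕ × ℕ => ιMonomial Q x y z k.1 k.2.1 k.2.2) = ⊤ := by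
  set S := Submodule.span R
    (Set.range fun k : ℕ × ℕ × ℕ => ιMonomial Q x y z k.1 k.2.1 k.2.2)
  have hmem (a b c : ℕ) : ιMonomial Q x y z a b c ∈ S :=
    Submodule.subset_span ⟨(a, b, c), rfl⟩
  have hself (w : M) : ι Q w * ι Q w = (-1 : ℤ) ^ 0 • (ι Q w * ι Q w) := by
    rw [pow_zero, one_smul]
  refine submodule_eq_top_of_ι_mul_mem hspan (by simpa [ιMonomial] using hmem 0 0 0) ?_
  intro v hv u hu
  suffices Submodule.map (LinearMap.mulLeft R (ι Q v)) S ≤ S from this ⟨u, hu, rfl⟩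
  refine (Submodule.map_span_le _ _ _).2 ?_
  rintro _ ⟨⟨a, b, c⟩, rfl⟩
  rcases hv with rfl | rfl | rfl <;> simp only [LinearMap.mulLeft_apply]
  · convert hmem (a + 1) b c using 1
    simp only [ιMonomial, pow_succ', mul_assoc]
  · convert zsmul_mem (hmem a (b + 1) c) ((-1) ^ a) using 1
    simp only [ιMonomial, ← mul_assoc, mul_pow_eq_neg_one_pow_smul
      (ι_mul_ι_eq_neg_one_pow_smul hxy.symm), one_mul, smul_mul_assoc, pow_succ']
  · convert zsmul_mem (hmem a b (c + 1)) ((-1) ^ (a + b)) using 1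
    rw [ιMonomial, mul_pow_mul_pow_mul_pow_eq_neg_one_pow_smul
      (ι_mul_ι_eq_neg_one_pow_smul hxz.symm) (ι_mul_ι_eq_neg_one_pow_smul hyz.symm) (hself _)]
    simp [ιMonomial, pow_succ, mul_assoc]

theorem ιMonomial_add_star_mem_center (hxy : Q.IsOrtho x y) (hxz : Q.IsOrtho x z)
    (hyz : Q.IsOrtho y z) (hspan : Submodule.span R {x, y, z} = ⊤) (a b c : ℕ) :
    ιMonomial Q x y z a b c + star (ιMonomial Q x y z a b c) ∈
      Subalgebra.center R (CliffordAlgebra Q) := by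
  rw [star_ιMonomial hxy hxz hyz]
  rcases Nat.even_or_odd (a + b + c + (a * b + b * c + c * a)) with heven | hodd
  · obtain ⟨hab, hbc⟩ : Even (a + b) ∧ Even (b + c) := by
      simp only [Nat.even_add, Nat.even_mul] at heven ⊢
      tauto
    have hm := ιMonomial_mem_center hxy hxz hyz hspan hab hbc
    rw [heven.neg_one_pow, one_smul]
    exact add_mem hm hm
  · rw [hodd.neg_one_pow, neg_one_zsmul, add_neg_cancel]
    exact zero_mem _

theorem add_star_mem_center_of_isOrtho (hxy : Q.IsOrtho x y) (hxz : Q.IsOrtho x z)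
    (hyz : Q.IsOrtho y z) (hspan : Submodule.span R {x, y, z} = ⊤) (B : CliffordAlgebra Q) :
    B + star B ∈ Subalgebra.center R (CliffordAlgebra Q) := by
  have hB := (span_range_ιMonomial hxy hxz hyz hspan).ge (Submodule.mem_top (x := B))
  induction hB using Submodule.span_induction with
  | mem _ hm =>
    obtain ⟨⟨a, b, c⟩, rfl⟩ := hm
    exact ιMonomial_add_star_mem_center hxy hxz hyz hspan a b c
  | zero => simp
  | add u w _ _ hu hw => simpa only [star_add, add_add_add_comm] using add_mem hu hw
  | smul r u _ hu => simpa only [star_smul, smul_add] using Subalgebra.smul_mem _ hu r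

end

end CliffordAlgebra

open CliffordAlgebra

theorem stmt_12 (V : Type*) [AddCommGroup V] [Module ℝ V]
    (hV : Module.finrank ℝ V = 3) (Q : QuadraticForm ℝ V)
    (B : CliffordAlgebra Q) :
    B + involute (reverse B) ∈ Subalgebra.center ℝ (CliffordAlgebra Q) := by
  have : FiniteDimensional ℝ V := Module.finite_of_finrank_eq_succ hV
  obtain ⟨v, hv⟩ := LinearMap.BilinForm.exists_orthogonal_basis
    (QuadraticForm.associated_isSymm ℝ Q)
  let e := v.reindex (finCongr hV)
  have hortho (i j : Fin 3) (hij : i ≠ j) : Q.IsOrtho (e i) (e j) := by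
    have := hv ((finCongr hV).symm.injective.ne hij)
    simp only [e, Module.Basis.reindex_apply]
    exact QuadraticMap.associated_isOrtho.1 this
  have hspan : Submodule.span ℝ {e 0, e 1, e 2} = ⊤ := by
    rw [← e.span_eq]
    congr 1
    ext
    simp [Fin.exists_fin_succ, eq_comm]
  rw [← star_def']
  exact add_star_mem_center_of_isOrtho (hortho 0 1 (by decide)) (hortho 0 2 (by decide))
    (hortho 1 2 (by decide)) hspan B
end

section
/- Let V be a real vector space with finrank V = 3 and Q a quadratic form on V. Then for every B in the Clifford algebra Cl(Q), the product B·(involute (reverse B)) lies in the center of Cl(Q). -/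
/-!
Clifford conjugation `star` is an involutive anti-automorphism, so `B * star B` is fixed by it and
`2 • (B * star B) = T (B * star B)` with `T x = x + star x`; hence it suffices that the linear
map `T` takes values in the center. For an orthogonal basis `e₀, e₁, e₂` the algebra is spanned by
the ordered monomials in the `eᵢ`, since each `eᵢ` can be moved past the earlier factors up to sign
and then absorbed. Conjugation negates the monomials of degree one and two and fixes `1` and
`e₀ e₁ e₂`, which is central because each `eᵢ` anticommutes with exactly two of its factors.
-/

open CliffordAlgebra

theorem mul_star_mem_center_of_forall_add_star_mem_center {R A : Type*} [CommRing R]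
    [Invertible (2 : R)] [Ring A] [StarRing A] [Algebra R A]
    (h : ∀ a : A, a + star a ∈ Subalgebra.center R A) (a : A) :
    a * star a ∈ Subalgebra.center R A := by
  have := Subalgebra.smul_mem _ (h (a * star a)) (⅟2 : R)
  rwa [star_mul_star, ← two_smul R, smul_smul, invOf_mul_self, one_smul] at this

namespace CliffordAlgebra

variable {R M : Type*} [CommRing R] [AddCommGroup M] [Module R M] {Q : QuadraticForm R M}

theorem mem_center_of_forall_commute_ι {w : CliffordAlgebra Q} (h : ∀ m, Commute (ι Q m) w) :
    w ∈ Subalgebra.center R (CliffordAlgebra Q) := by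
  refine Subalgebra.mem_center_iff.2 fun b => ?_
  change Commute b w
  induction b using CliffordAlgebra.induction with
  | algebraMap r => exact Algebra.commutes r w
  | ι m => exact h m
  | mul a c ha hc => exact ha.mul_left hc
  | add a c ha hc => exact ha.add_left hc

theorem semiconjBy_ι_neg_of_isOrtho {a b : M} (h : Q.IsOrtho a b) :
    SemiconjBy (ι Q a) (ι Q b) (-ι Q b) :=
  (ι_mul_ι_comm_of_isOrtho h).trans (neg_mul _ _).symm

theorem span_ι_mul_span_one_ι_le (m : M) :
    (R ∙ ι Q m) * Submodule.span R {1, ι Q m} ≤ Submodule.span R {1, ι Q m} := by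
  rw [Submodule.span_mul_span, Submodule.span_le]
  rintro _ ⟨_, rfl, c, rfl | rfl, rfl⟩ <;> dsimp only
  · exact Submodule.subset_span (by simp)
  · rw [ι_sq_scalar, Algebra.algebraMap_eq_smul_one]
    exact Submodule.smul_mem _ _ (Submodule.subset_span (by simp))

theorem span_ι_mul_span_one_ι_le_of_isOrtho {a m : M} (h : Q.IsOrtho a m) :
    (R ∙ ι Q m) * Submodule.span R {1, ι Q a} ≤ Submodule.span R {1, ι Q a} * (R ∙ ι Q m) := by
  rw [Submodule.span_mul_span, Submodule.span_mul_span, Submodule.span_le]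
  rintro _ ⟨_, rfl, c, rfl | rfl, rfl⟩ <;> dsimp only
  · exact Submodule.subset_span ⟨1, by simp, ι Q m, rfl, by simp⟩
  · rw [ι_mul_ι_comm_of_isOrtho h.symm]
    exact Submodule.neg_mem _ (Submodule.subset_span ⟨ι Q a, by simp, ι Q m, rfl, rfl⟩)

open Submodule in
theorem eq_top_of_one_mem_of_range_ι_mul_le {P : Submodule R (CliffordAlgebra Q)} (hone : 1 ∈ P)
    (hι : LinearMap.range (ι Q) * P ≤ P) : P = ⊤ := by
  refine eq_top_iff'.2 fun x => ?_
  induction x using left_induction with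
  | algebraMap r => simpa [Algebra.algebraMap_eq_smul_one] using smul_mem _ r hone
  | add x y hx hy => exact add_mem hx hy
  | ι_mul x m hx => exact hι (mul_mem_mul ⟨m, rfl⟩ hx)

open Submodule in
theorem range_ι_eq_iSup_span_ι {ι' : Type*} (b : Module.Basis ι' R M) :
    LinearMap.range (ι Q) = ⨆ i, R ∙ ι Q (b i) := by
  rw [LinearMap.range_eq_map, ← b.span_eq, map_span, ← Set.range_comp, span_range_eq_iSup]
  rfl

open Submodule in
theorem span_one_ι_mul_span_one_ι_mul_span_one_ι_eq_top (b : Module.Basis (Fin 3) R M)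
    (hb : Pairwise fun i j => Q.IsOrtho (b i) (b j)) :
    span R {1, ι Q (b 0)} * span R {1, ι Q (b 1)} * span R {1, ι Q (b 2)} = ⊤ := by
  set U : Fin 3 → Submodule R (CliffordAlgebra Q) := fun i => span R {1, ι Q (b i)}
  set L : Fin 3 → Submodule R (CliffordAlgebra Q) := fun i => R ∙ ι Q (b i)
  have hself : ∀ i, L i * U i ≤ U i := fun i => span_ι_mul_span_one_ι_le _
  have hortho : ∀ i j, i ≠ j → L j * U i ≤ U i * L j := fun i j hij =>
    span_ι_mul_span_one_ι_le_of_isOrtho (hb hij)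
  have hL : ∀ i, L i * (U 0 * U 1 * U 2) ≤ U 0 * U 1 * U 2 := by
    intro i
    fin_cases i
    · calc L 0 * (U 0 * U 1 * U 2) = L 0 * U 0 * U 1 * U 2 := by simp only [mul_assoc]
        _ ≤ U 0 * U 1 * U 2 := by gcongr; exact hself 0
    · calc L 1 * (U 0 * U 1 * U 2) = L 1 * U 0 * U 1 * U 2 := by simp only [mul_assoc]
        _ ≤ U 0 * L 1 * U 1 * U 2 := by gcongr ?_ * _ * _; exact hortho 0 1 (by decide)
        _ ≤ U 0 * U 1 * U 2 := by
          rw [mul_assoc (U 0)]; gcongr U 0 * ?_ * _; exact hself 1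
    · calc L 2 * (U 0 * U 1 * U 2) = L 2 * U 0 * U 1 * U 2 := by simp only [mul_assoc]
        _ ≤ U 0 * L 2 * U 1 * U 2 := by gcongr ?_ * _ * _; exact hortho 0 2 (by decide)
        _ ≤ U 0 * U 1 * L 2 * U 2 := by
          rw [mul_assoc (U 0) (L 2), mul_assoc (U 0) (U 1)]
          gcongr U 0 * ?_ * _; exact hortho 1 2 (by decide)
        _ ≤ U 0 * U 1 * U 2 := by rw [mul_assoc _ (L 2)]; gcongr; exact hself 2
  refine eq_top_of_one_mem_of_range_ι_mul_le ?_ ?_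
  · have : ∀ i, (1 : CliffordAlgebra Q) ∈ U i := fun i => subset_span (by simp)
    simpa using mul_mem_mul (mul_mem_mul (this 0) (this 1)) (this 2)
  · rw [range_ι_eq_iSup_span_ι b, iSup_mul]
    exact iSup_le hL

theorem commute_ι_mul_ι_of_isOrtho {a b c : M} (ha : Q.IsOrtho c a) (hb : Q.IsOrtho c b) :
    Commute (ι Q c) (ι Q a * ι Q b) := by
  have := (semiconjBy_ι_neg_of_isOrtho ha).mul_right (semiconjBy_ι_neg_of_isOrtho hb)
  rwa [neg_mul_neg] at this

theorem star_ι_mul_ι_of_isOrtho {a b : M} (h : Q.IsOrtho a b) :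
    star (ι Q a * ι Q b) = -(ι Q a * ι Q b) := by
  rw [star_mul, star_ι, star_ι, neg_mul_neg, ι_mul_ι_comm_of_isOrtho h.symm]

theorem star_ι_mul_ι_mul_ι_of_isOrtho {a b c : M} (hab : Q.IsOrtho a b) (hac : Q.IsOrtho a c)
    (hbc : Q.IsOrtho b c) : star (ι Q a * ι Q b * ι Q c) = ι Q a * ι Q b * ι Q c := by
  rw [star_mul, star_ι, star_ι_mul_ι_of_isOrtho hab, neg_mul_neg,
    (commute_ι_mul_ι_of_isOrtho hac.symm hbc.symm).eq]

theorem ι_mul_ι_mul_ι_mem_center (b : Module.Basis (Fin 3) R M)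
    (hb : Pairwise fun i j => Q.IsOrtho (b i) (b j)) :
    ι Q (b 0) * ι Q (b 1) * ι Q (b 2) ∈ Subalgebra.center R (CliffordAlgebra Q) := by
  set ω := ι Q (b 0) * ι Q (b 1) * ι Q (b 2) with hω
  have h0 : Commute (ι Q (b 0)) ω := by
    rw [hω, mul_assoc]
    exact (Commute.refl _).mul_right
      (commute_ι_mul_ι_of_isOrtho (hb (by decide)) (hb (by decide)))
  have h1 : Commute (ι Q (b 1)) ω := by
    have h10 : Q.IsOrtho (b 1) (b 0) := hb (by decide)
    have h12 : Q.IsOrtho (b 1) (b 2) := hb (by decide)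
    have := ((semiconjBy_ι_neg_of_isOrtho h10).mul_right (Commute.refl _)).mul_right
      (semiconjBy_ι_neg_of_isOrtho h12)
    simp only [neg_mul, mul_neg, neg_neg] at this
    exact this
  have h2 : Commute (ι Q (b 2)) ω :=
    (commute_ι_mul_ι_of_isOrtho (hb (by decide)) (hb (by decide))).mul_right (Commute.refl _)
  have hbasis : ∀ i, Commute (ι Q (b i)) ω := by
    intro i
    fin_cases i
    exacts [h0, h1, h2]
  have : LinearMap.mulRight R ω ∘ₗ ι Q = LinearMap.mulLeft R ω ∘ₗ ι Q :=
    b.ext fun i => (hbasis i).eq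
  exact mem_center_of_forall_commute_ι fun m => LinearMap.congr_fun this m

open Submodule in
theorem add_star_mem_center_of_orthogonal_basis (b : Module.Basis (Fin 3) R M)
    (hb : Pairwise fun i j => Q.IsOrtho (b i) (b j)) (B : CliffordAlgebra Q) :
    B + star B ∈ Subalgebra.center R (CliffordAlgebra Q) := by
  have hB : B ∈ span R {1, ι Q (b 0)} * span R {1, ι Q (b 1)} * span R {1, ι Q (b 2)} :=
    span_one_ι_mul_span_one_ι_mul_span_one_ι_eq_top b hb ▸ mem_top
  rw [span_mul_span, span_mul_span] at hB
  have h01 : Q.IsOrtho (b 0) (b 1) := hb (by decide)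
  have h02 : Q.IsOrtho (b 0) (b 2) := hb (by decide)
  have h12 : Q.IsOrtho (b 1) (b 2) := hb (by decide)
  have hω := ι_mul_ι_mul_ι_mem_center b hb
  induction hB using span_induction with
  | mem x hx =>
    obtain ⟨_, ⟨a, ha, c, hc, rfl⟩, d, hd, rfl⟩ := hx
    rcases ha with rfl | rfl <;> rcases hc with rfl | rfl <;> rcases hd with rfl | rfl <;>
      simp only [one_mul, mul_one, star_one, star_ι, add_neg_cancel, star_ι_mul_ι_of_isOrtho h01,
        star_ι_mul_ι_of_isOrtho h02, star_ι_mul_ι_of_isOrtho h12,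
        star_ι_mul_ι_mul_ι_of_isOrtho h01 h02 h12]
    all_goals first
      | exact zero_mem _
      | exact add_mem (one_mem _) (one_mem _)
      | exact add_mem hω hω
  | zero => simp
  | add x y _ _ hx hy => rw [star_add, add_add_add_comm]; exact add_mem hx hy
  | smul r x _ hx => rw [star_smul, ← smul_add]; exact Subalgebra.smul_mem _ hx r

theorem add_star_mem_center_of_finrank_eq_three {K V : Type*} [Field K] [Invertible (2 : K)]
    [AddCommGroup V] [Module K V] {Q : QuadraticForm K V} (hV : Module.finrank K V = 3)
    (B : CliffordAlgebra Q) : B + star B ∈ Subalgebra.center K (CliffordAlgebra Q) := by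
  have : FiniteDimensional K V := Module.finite_of_finrank_eq_succ hV
  obtain ⟨v, hv⟩ :=
    LinearMap.BilinForm.exists_orthogonal_basis (QuadraticForm.associated_isSymm K Q)
  refine add_star_mem_center_of_orthogonal_basis (v.reindex (finCongr hV)) (fun i j hij => ?_) B
  simpa using hv ((finCongr hV).symm.injective.ne hij)

end CliffordAlgebra

theorem stmt_13 (V : Type*) [AddCommGroup V] [Module ℝ V]
    (hV : Module.finrank ℝ V = 3) (Q : QuadraticForm ℝ V)
    (B : CliffordAlgebra Q) :
    B * involute (reverse B) ∈ Subalgebra.center ℝ (CliffordAlgebra Q) := by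
  rw [← star_def']
  exact mul_star_mem_center_of_forall_add_star_mem_center
    (add_star_mem_center_of_finrank_eq_three hV) B
end

section
/- Let V be a real vector space with finrank V = 3 and Q a quadratic form on V. Then for every D in the Clifford algebra Cl(Q), the product D·(involute D)·(reverse D)·(involute (reverse D)) lies in the range of the structure map algebraMap ℝ → Cl(Q). -/
/-!
Choose a basis `e₀, e₁, e₂` of `V` orthogonal for `Q`. The eight blades `e_S` span `Cl(Q)`,
and Clifford conjugation `x̄ = involute (reverse x)` (Mathlib's `star`) fixes `1` and the
pseudoscalar `ω = e₀e₁e₂` while negating the six other blades; moreover `ω` is central. So the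
self-conjugate element `D D̄` is `s + tω`, and since `involute D * reverse D = involute (D D̄)`
`= s - tω` is central, the product is `D (s - tω) D̄ = (s - tω)(s + tω) = s² - t²ω²`, a scalar
because `ω²` is.
-/

namespace CliffordAlgebra

variable {R : Type*} [CommRing R] {M : Type*} [AddCommGroup M] [Module R M]
  {Q : QuadraticForm R M}

theorem ι_mul_ι_mul_eq_smul (m : M) (x : CliffordAlgebra Q) :
    ι Q m * (ι Q m * x) = Q m • x := by
  rw [← mul_assoc, ι_sq_scalar, Algebra.smul_def]

section Orthogonal

variable {I : Type*} [LinearOrder I] {e : I → M} (ho : Pairwise fun i j ↦ Q.IsOrtho (e i) (e j))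
include ho

-- Oriented by `j < i` so that `simp` sorts products of basis vectors into increasing order.
theorem ι_mul_ι_of_lt {i j : I} (h : j < i) :
    ι Q (e i) * ι Q (e j) = -(ι Q (e j) * ι Q (e i)) :=
  ι_mul_ι_comm_of_isOrtho (ho h.ne')

theorem ι_mul_ι_mul_of_lt {i j : I} (h : j < i) (x : CliffordAlgebra Q) :
    ι Q (e i) * (ι Q (e j) * x) = -(ι Q (e j) * (ι Q (e i) * x)) :=
  ι_mul_ι_mul_of_isOrtho x (ho h.ne')

end Orthogonal

variable (Q) in
def pseudoscalar (e : Fin 3 → M) : CliffordAlgebra Q := ι Q (e 0) * ι Q (e 1) * ι Q (e 2)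

variable (Q) in
def basisBlades (e : Fin 3 → M) : Set (CliffordAlgebra Q) :=
  {1, ι Q (e 0), ι Q (e 1), ι Q (e 2), ι Q (e 0) * ι Q (e 1), ι Q (e 0) * ι Q (e 2),
    ι Q (e 1) * ι Q (e 2), pseudoscalar Q e}

section OrthogonalTriple

variable {e : Fin 3 → M}

theorem involute_pseudoscalar : involute (pseudoscalar Q e) = -pseudoscalar Q e := by
  simp [pseudoscalar]

variable (ho : Pairwise fun i j ↦ Q.IsOrtho (e i) (e j))
include ho

theorem star_pseudoscalar : star (pseudoscalar Q e) = pseudoscalar Q e := by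
  simp [pseudoscalar, mul_assoc, ι_mul_ι_of_lt ho, ι_mul_ι_mul_of_lt ho]

theorem pseudoscalar_mul_self :
    pseudoscalar Q e * pseudoscalar Q e = algebraMap R _ (-(Q (e 0) * Q (e 1) * Q (e 2))) := by
  simp [pseudoscalar, mul_assoc, ι_mul_ι_mul_of_lt ho, Algebra.algebraMap_eq_smul_one, smul_smul]
  ring_nf

theorem commute_pseudoscalar_ι (i : Fin 3) : Commute (pseudoscalar Q e) (ι Q (e i)) := by
  fin_cases i <;>
    simp [Commute, SemiconjBy, pseudoscalar, mul_assoc, ι_mul_ι_of_lt ho, ι_mul_ι_mul_of_lt ho,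
      ι_mul_ι_mul_eq_smul]

theorem ι_mul_mem_span_basisBlades (i : Fin 3) {x : CliffordAlgebra Q}
    (hx : x ∈ Submodule.span R (basisBlades Q e)) :
    ι Q (e i) * x ∈ Submodule.span R (basisBlades Q e) := by
  induction hx using Submodule.span_induction with
  | mem y hy =>
    have hmem {z : CliffordAlgebra Q} (hz : z ∈ basisBlades Q e) :
        z ∈ Submodule.span R (basisBlades Q e) :=
      Submodule.subset_span hz
    simp only [basisBlades, Set.mem_insert_iff, Set.mem_singleton_iff] at hy
    obtain rfl | rfl | rfl : i = 0 ∨ i = 1 ∨ i = 2 := by fin_cases i <;> simp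
    all_goals
      rcases hy with rfl | rfl | rfl | rfl | rfl | rfl | rfl | rfl <;>
      (try simp (disch := decide) only [pseudoscalar, mul_assoc, ι_mul_ι_of_lt ho,
        ι_mul_ι_mul_of_lt ho, ι_mul_ι_mul_eq_smul, ι_sq_scalar, Algebra.algebraMap_eq_smul_one,
        mul_smul_comm, mul_neg, mul_one]) <;>
      repeat (first | apply Submodule.neg_mem | apply Submodule.smul_mem)
    all_goals
      exact hmem (by simp only [basisBlades, pseudoscalar, mul_assoc, Set.mem_insert_iff,
        Set.mem_singleton_iff, true_or, or_true])
  | zero => simp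
  | add x y _ _ hx hy => rw [mul_add]; exact add_mem hx hy
  | smul r x _ hx => rw [mul_smul_comm]; exact Submodule.smul_mem _ r hx

theorem add_star_mem_span_one_pseudoscalar {x : CliffordAlgebra Q}
    (hx : x ∈ Submodule.span R (basisBlades Q e)) :
    x + star x ∈ Submodule.span R {1, pseudoscalar Q e} := by
  have h1 : (1 : CliffordAlgebra Q) ∈ Submodule.span R {1, pseudoscalar Q e} :=
    Submodule.subset_span (by simp)
  have hω : pseudoscalar Q e ∈ Submodule.span R {1, pseudoscalar Q e} :=
    Submodule.subset_span (by simp)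
  induction hx using Submodule.span_induction with
  | mem y hy =>
    simp only [basisBlades, Set.mem_insert_iff, Set.mem_singleton_iff] at hy
    rcases hy with rfl | rfl | rfl | rfl | rfl | rfl | rfl | rfl
    · rw [star_one]; exact add_mem h1 h1
    iterate 6 simp [ι_mul_ι_of_lt ho]
    · rw [star_pseudoscalar ho]; exact add_mem hω hω
  | zero => simp
  | add x y _ _ hx hy => rw [star_add, add_add_add_comm]; exact add_mem hx hy
  | smul r x _ hx => rw [star_smul, ← smul_add]; exact Submodule.smul_mem _ r hx

end OrthogonalTriple

section OrthogonalBasis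

variable (b : Module.Basis (Fin 3) R M) (ho : Pairwise fun i j ↦ Q.IsOrtho (b i) (b j))
include ho

theorem span_basisBlades_eq_top : Submodule.span R (basisBlades Q b) = ⊤ := by
  set S := Submodule.span R (basisBlades Q b)
  have hι (m : M) {y : CliffordAlgebra Q} (hy : y ∈ S) : ι Q m * y ∈ S := by
    rw [← b.sum_repr m, map_sum, Finset.sum_mul]
    refine Submodule.sum_mem _ fun i _ ↦ ?_
    rw [map_smul, smul_mul_assoc]
    exact S.smul_mem _ (ι_mul_mem_span_basisBlades ho i hy)
  have hmul (x : CliffordAlgebra Q) : ∀ y ∈ S, x * y ∈ S := by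
    induction x using CliffordAlgebra.induction with
    | algebraMap r => intro y hy; rw [← Algebra.smul_def]; exact S.smul_mem r hy
    | ι m => exact fun y ↦ hι m
    | mul x x' hx hx' => intro y hy; rw [mul_assoc]; exact hx _ (hx' y hy)
    | add x x' hx hx' => intro y hy; rw [add_mul]; exact add_mem (hx y hy) (hx' y hy)
  refine eq_top_iff.2 fun x _ ↦ ?_
  simpa using hmul x 1 (Submodule.subset_span (by simp [basisBlades]))

theorem commute_pseudoscalar (x : CliffordAlgebra Q) : Commute (pseudoscalar Q b) x := by
  induction x using CliffordAlgebra.induction with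
  | algebraMap r => exact (Algebra.commute_algebraMap_left r _).symm
  | ι m =>
    rw [← b.sum_repr m, map_sum]
    exact Commute.sum_right _ _ _ fun i _ ↦ by
      rw [map_smul]; exact (commute_pseudoscalar_ι ho i).smul_right _
  | mul x y hx hy => exact hx.mul_right hy
  | add x y hx hy => exact hx.add_right hy

theorem mem_span_one_pseudoscalar_of_isSelfAdjoint [Invertible (2 : R)] {x : CliffordAlgebra Q}
    (hx : IsSelfAdjoint x) : x ∈ Submodule.span R {1, pseudoscalar Q b} := by
  have h := add_star_mem_span_one_pseudoscalar ho (x := x)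
    (by rw [span_basisBlades_eq_top b ho]; trivial)
  rw [hx.star_eq, ← two_smul R x] at h
  simpa using Submodule.smul_mem _ (⅟2 : R) h

theorem mul_involute_mul_reverse_mul_involute_reverse_mem_range_algebraMap [Invertible (2 : R)]
    (D : CliffordAlgebra Q) :
    D * involute D * reverse D * involute (reverse D) ∈
      Set.range (algebraMap R (CliffordAlgebra Q)) := by
  set ω := pseudoscalar Q b
  obtain ⟨s, t, hst⟩ : ∃ s t : R, s • 1 + t • ω = D * star D :=
    Submodule.mem_span_pair.1
      (mem_span_one_pseudoscalar_of_isSelfAdjoint b ho (.mul_star_self D))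
  have hcentral (y : CliffordAlgebra Q) : Commute (s • 1 - t • ω) y :=
    ((Commute.one_left y).smul_left s).sub_left ((commute_pseudoscalar b ho y).smul_left t)
  have hω2 : ω * ω = algebraMap R _ (-(Q (b 0) * Q (b 1) * Q (b 2))) := pseudoscalar_mul_self ho
  refine ⟨s * s + t * t * (Q (b 0) * Q (b 1) * Q (b 2)), ?_⟩
  calc algebraMap R _ (s * s + t * t * (Q (b 0) * Q (b 1) * Q (b 2)))
      = (s • 1 - t • ω) * (s • 1 + t • ω) := by
        simp only [sub_mul, mul_add, smul_mul_assoc, mul_smul_comm, one_mul, mul_one, hω2,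
          Algebra.algebraMap_eq_smul_one]
        module
    _ = D * (s • 1 - t • ω) * star D := by rw [hst, ← mul_assoc, (hcentral D).eq, mul_assoc]
    _ = D * involute (D * star D) * star D := by
        rw [← hst]; simp [ω, involute_pseudoscalar, sub_eq_add_neg]
    _ = D * involute D * reverse D * involute (reverse D) := by
        rw [star_def', map_mul, involute_involute, ← mul_assoc D]

end OrthogonalBasis

end CliffordAlgebra

open CliffordAlgebra

theorem stmt_14 (V : Type*) [AddCommGroup V] [Module ℝ V]
    (hV : Module.finrank ℝ V = 3) (Q : QuadraticForm ℝ V)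
    (D : CliffordAlgebra Q) :
    D * involute D * reverse D * involute (reverse D) ∈
      Set.range (algebraMap ℝ (CliffordAlgebra Q)) := by
  have : FiniteDimensional ℝ V := Module.finite_of_finrank_eq_succ hV
  obtain ⟨b, hb⟩ :=
    LinearMap.BilinForm.exists_orthogonal_basis (QuadraticForm.associated_isSymm ℝ Q)
  refine mul_involute_mul_reverse_mul_involute_reverse_mem_range_algebraMap
    (b.reindex (finCongr hV)) (fun i j hij ↦ ?_) D
  simp only [Module.Basis.reindex_apply]
  exact QuadraticMap.associated_isOrtho.1 (hb ((finCongr hV).symm.injective.ne hij))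
end
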